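/- arXiv:1510.05377 — 2 statements merged into one kernel-verified Lean document; each statement's English description precedes it below -/
import Mathlib

section
/- With the notation of the noncommutative hyperbolic ball: B⁺ₙ(c,r) is closed in the norm topology of Mₙ(A). -/
/-- The imaginary part `Im x = (x - x*)/(2i)` of an element of a complex star algebra. -/
noncomputable def imPart {B : Type*} [Ring B] [StarRing B] [Algebra ℂ B] (x : B) : B :=
  ((2 * Complex.I)⁻¹ : ℂ) • (x - star x)

/-- The real part `Re x = (x + x*)/2` of an element of a complex star algebra. -/
noncomputable def rePart {B : Type*} [Ring B] [StarRing B] [Algebra ℂ B] (x : B) : B :=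
  ((2 : ℂ)⁻¹) • (x + star x)

/-- The noncommutative hyperbolic ball `B⁺ₙ(c, r)`: here the C*-algebra `A` plays the role of
`Mₙ(𝒜)` for a von Neumann algebra `𝒜`.  It consists of those `a` with `Im a` positive and
invertible such that `‖(Im a)^{-1/2} (a − c) (Im c)^{-1/2}‖ ≤ r`. -/
noncomputable def ncUpperBall {A : Type*} [CStarAlgebra A] [PartialOrder A]
    [StarOrderedRing A] (c : A) (r : ℝ) : Set A :=
  {a | (0 ≤ imPart a ∧ IsUnit (imPart a)) ∧
    ‖Ring.inverse (CFC.sqrt (imPart a)) * (a - c) * Ring.inverse (CFC.sqrt (imPart c))‖ ≤ r}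

section aux
variable {A : Type*} [CStarAlgebra A]

lemma imPart_isSelfAdjoint (x : A) : IsSelfAdjoint (imPart x) := by
  have h : star ((2 * Complex.I)⁻¹ : ℂ) = -((2 * Complex.I)⁻¹ : ℂ) := by
    simp [Complex.ext_iff]
  rw [IsSelfAdjoint, imPart, star_smul, h, star_sub, star_star, neg_smul, ← smul_neg, neg_sub]

lemma imPart_sub (x y : A) : imPart (x - y) = imPart x - imPart y := by
  rw [imPart, imPart, imPart, star_sub, ← smul_sub]
  congr 1
  abel

lemma continuous_imPart : Continuous (imPart : A → A) :=
  (continuous_id.sub continuous_star).const_smul _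

lemma two_I_smul_imPart (x : A) : (2 * Complex.I) • imPart x = x - star x := by
  rw [imPart, smul_smul, mul_inv_cancel₀ (by simp), one_smul]

variable [PartialOrder A] [StarOrderedRing A]

lemma isUnit_sqrt {p : A} (hp : 0 ≤ p) (hpu : IsUnit p) : IsUnit (CFC.sqrt p) := by
  set s := CFC.sqrt p with hs
  have hss : s * s = p := CFC.sqrt_mul_sqrt_self p hp
  have hcomm : Commute s p := by rw [← hss]; exact (Commute.refl s).mul_right (Commute.refl s)
  lift p to Aˣ using hpu
  have hcomm' : Commute s (↑p⁻¹ : A) := hcomm.units_inv_right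
  refine ⟨⟨s, s * ↑p⁻¹, ?_, ?_⟩, rfl⟩
  · rw [← mul_assoc, hss]; exact p.mul_inv
  · rw [mul_assoc, ← hcomm'.eq, ← mul_assoc, hss]; exact p.mul_inv

lemma inv_sqrt_sq {p : A} (hp : 0 ≤ p) (hpu : IsUnit p) :
    Ring.inverse (CFC.sqrt p) * Ring.inverse (CFC.sqrt p) = Ring.inverse p := by
  rw [← Ring.mul_inverse_rev' (Commute.refl _), CFC.sqrt_mul_sqrt_self p hp]

lemma sqrt_mul_inv_sqrt {p : A} (hp : 0 ≤ p) (hpu : IsUnit p) :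
    CFC.sqrt p * Ring.inverse (CFC.sqrt p) = 1 :=
  Ring.mul_inverse_cancel _ (isUnit_sqrt hp hpu)

lemma inv_sqrt_mul_sqrt {p : A} (hp : 0 ≤ p) (hpu : IsUnit p) :
    Ring.inverse (CFC.sqrt p) * CFC.sqrt p = 1 :=
  Ring.inverse_mul_cancel _ (isUnit_sqrt hp hpu)

lemma star_inv_sqrt {p : A} (hp : 0 ≤ p) :
    star (Ring.inverse (CFC.sqrt p)) = Ring.inverse (CFC.sqrt p) := by
  rw [← Ring.inverse_star, (IsSelfAdjoint.of_nonneg (CFC.sqrt_nonneg (a := p))).star_eq]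

lemma normCond_iff {m p d : A} (hm : 0 ≤ m) (hmu : IsUnit m) (hp : 0 ≤ p) (hpu : IsUnit p)
    {r : ℝ} (hr : 0 ≤ r) :
    ‖Ring.inverse (CFC.sqrt p) * d * Ring.inverse (CFC.sqrt m)‖ ≤ r ↔
      star d * Ring.inverse p * d ≤ (r ^ 2) • m := by
  set s := CFC.sqrt m with hsdef
  set q := Ring.inverse (CFC.sqrt p)
  set n := Ring.inverse s
  set x := q * d * n with hx
  have hs : IsSelfAdjoint s := IsSelfAdjoint.of_nonneg (CFC.sqrt_nonneg (a := m))
  have hsn : s * n = 1 := sqrt_mul_inv_sqrt hm hmu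
  have hns : n * s = 1 := inv_sqrt_mul_sqrt hm hmu
  have hss : s * s = m := CFC.sqrt_mul_sqrt_self m hm
  have hxx : star x * x = n * (star d * Ring.inverse p * d) * n := by
    have hq2 : q * q = Ring.inverse p := inv_sqrt_sq hp hpu
    rw [hx, star_mul, star_mul, star_inv_sqrt hm, star_inv_sqrt hp]
    calc n * (star d * q) * (q * d * n)
        = n * (star d * (q * q) * d) * n := by noncomm_ring
      _ = n * (star d * Ring.inverse p * d) * n := by rw [hq2]
  have h1 : ‖x‖ ≤ r ↔ ‖star x * x‖ ≤ r ^ 2 := by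
    rw [CStarRing.norm_star_mul_self, ← pow_two]
    exact (pow_le_pow_iff_left₀ (norm_nonneg _) hr two_ne_zero).symm
  have h2 : ‖star x * x‖ ≤ r ^ 2 ↔ star x * x ≤ algebraMap ℝ A (r ^ 2) :=
    CStarAlgebra.norm_le_iff_le_algebraMap _ (by positivity) (star_mul_self_nonneg x)
  rw [h1, h2, hxx]
  constructor
  · intro h
    have h' := hs.conjugate_le_conjugate h
    calc star d * Ring.inverse p * d
        = (s * n) * (star d * Ring.inverse p * d) * (n * s) := by rw [hsn, hns]; noncomm_ring
      _ = s * (n * (star d * Ring.inverse p * d) * n) * s := by noncomm_ring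
      _ ≤ s * algebraMap ℝ A (r ^ 2) * s := h'
      _ = (r ^ 2) • m := by
          rw [Algebra.algebraMap_eq_smul_one, mul_smul_comm, mul_one, smul_mul_assoc, hss]
  · intro h
    have hn : IsSelfAdjoint n := by
      rw [IsSelfAdjoint, star_inv_sqrt hm]
    have h' := hn.conjugate_le_conjugate h
    calc n * (star d * Ring.inverse p * d) * n
        ≤ n * ((r ^ 2) • m) * n := h'
      _ = (r ^ 2) • (n * m * n) := by rw [mul_smul_comm, smul_mul_assoc]
      _ = algebraMap ℝ A (r ^ 2) := by
          have h1 : n * m * n = 1 := by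
            rw [← hss, show n * (s * s) * n = (n * s) * (s * n) from by noncomm_ring,
              hns, hsn, mul_one]
          rw [h1, Algebra.algebraMap_eq_smul_one]

lemma lowerBound {m p d : A} (hp : 0 ≤ p) (hpu : IsUnit p)
    (himd : (2 * Complex.I) • (p - m) = d - star d) {r : ℝ} (hr : 0 < r)
    (hq : star d * Ring.inverse p * d ≤ r ^ 2 • m) :
    m ≤ (r ^ 2 + 2) • p := by
  set t : ℝ := (r ^ 2)⁻¹ with ht
  have htpos : 0 < t := by positivity
  set s := CFC.sqrt p with hsdef
  set q := Ring.inverse s with hqdef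
  set e := q * d with hedef
  set α : ℂ := (t : ℂ) * Complex.I with hα
  set z := s - α • e with hz
  have hsq : s * q = 1 := sqrt_mul_inv_sqrt hp hpu
  have hqs : q * s = 1 := inv_sqrt_mul_sqrt hp hpu
  have hss : s * s = p := CFC.sqrt_mul_sqrt_self p hp
  have hse : s * e = d := by rw [hedef, ← mul_assoc, hsq, one_mul]
  have hes : star e * s = star d := by
    rw [hedef, star_mul, star_inv_sqrt hp, mul_assoc, hqs, mul_one]
  have hee : star e * e = star d * Ring.inverse p * d := by
    rw [hedef, star_mul, star_inv_sqrt hp]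
    calc (star d * q) * (q * d) = star d * (q * q) * d := by noncomm_ring
      _ = star d * Ring.inverse p * d := by rw [inv_sqrt_sq hp hpu]
  have hstarz : star z = s + α • star e := by
    rw [hz, star_sub, (IsSelfAdjoint.of_nonneg (CFC.sqrt_nonneg (a := p))).star_eq, star_smul]
    have : star α = -α := by simp [hα, Complex.ext_iff]
    rw [this, neg_smul, sub_neg_eq_add]
  have expand : star z * z
      = p + α • (star d - d) - (α * α) • (star e * e) := by
    rw [hstarz, hz, mul_sub, add_mul, add_mul, smul_mul_assoc, smul_mul_assoc, mul_smul_comm,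
      mul_smul_comm, smul_smul, hss, hse, hes, smul_sub]
    abel
  have hαd : α • (star d - d) = (2 * t) • (p - m) := by
    have h1 : star d - d = -((2 * Complex.I) • (p - m)) := by rw [himd]; abel
    rw [h1, smul_neg, smul_smul]
    have h2 : -(α * (2 * Complex.I)) = ((2 * t : ℝ) : ℂ) := by
      rw [hα]; push_cast; linear_combination (-2 * (t : ℂ)) * Complex.I_sq
    rw [← neg_smul, h2, Complex.coe_smul]
  have hαα : -((α * α) • (star e * e)) = (t ^ 2) • (star e * e) := by
    have h2 : -(α * α) = ((t ^ 2 : ℝ) : ℂ) := by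
      rw [hα]; push_cast; linear_combination (-(t : ℂ) ^ 2) * Complex.I_sq
    rw [← neg_smul, h2, Complex.coe_smul]
  have key : (0 : A) ≤ p + (2 * t) • (p - m) + t ^ 2 • (star d * Ring.inverse p * d) := by
    have h0 := star_mul_self_nonneg z
    rw [expand, hαd] at h0
    rw [← hee, ← hαα]
    calc (0 : A) ≤ p + (2 * t) • (p - m) - (α * α) • (star e * e) := h0
      _ = p + (2 * t) • (p - m) + -((α * α) • (star e * e)) := by abel
  have h5 : t ^ 2 • (star d * Ring.inverse p * d) ≤ t ^ 2 • (r ^ 2 • m) :=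
    smul_le_smul_of_nonneg_left hq (by positivity)
  have h6 : (0 : A) ≤ p + (2 * t) • (p - m) + t ^ 2 • (r ^ 2 • m) :=
    key.trans (add_le_add_right h5 _)
  have h7 : p + (2 * t) • (p - m) + t ^ 2 • (r ^ 2 • m)
      = (1 + 2 * t) • p - t • m := by
    match_scalars <;> (simp only [ht]; field_simp; try ring)
  rw [h7, sub_nonneg] at h6
  have h8 : m = t⁻¹ • (t • m) := by rw [smul_smul, inv_mul_cancel₀ htpos.ne', one_smul]
  calc m = t⁻¹ • (t • m) := h8
    _ ≤ t⁻¹ • ((1 + 2 * t) • p) := smul_le_smul_of_nonneg_left h6 (by positivity)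
    _ = (r ^ 2 + 2) • p := by
        rw [smul_smul]
        congr 1
        rw [ht]
        field_simp

end aux

/-- `B⁺ₙ(c,r)` is closed in the norm topology. -/
theorem stmt_10 {A : Type*} [CStarAlgebra A] [PartialOrder A] [StarOrderedRing A]
    (c : A) (r : ℝ) (hr : 0 < r) (hc : 0 ≤ imPart c ∧ IsUnit (imPart c)) :
    IsClosed (ncUpperBall c r) := by
  obtain hsub | hnt := subsingleton_or_nontrivial A
  · exact (Set.toFinite _).isClosed
  obtain ⟨hm, hmu⟩ := hc
  set m := imPart c with hmdef
  have hsa : IsSelfAdjoint m := imPart_isSelfAdjoint c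
  obtain ⟨δ, hδpos, hδ⟩ : ∃ δ > 0, algebraMap ℝ A δ ≤ m := by
    rw [CFC.exists_pos_algebraMap_le_iff hsa]
    intro x hx
    have h0 : x ≠ 0 := by
      intro h
      exact (spectrum.zero_notMem_iff ℝ).mpr hmu (h ▸ hx)
    exact (spectrum_nonneg_of_nonneg hm hx).lt_of_ne (Ne.symm h0)
  set k : ℝ := (r ^ 2 + 2)⁻¹ with hkdef
  have hk : 0 < k := by positivity
  have hunit : ∀ a : A, k • m ≤ imPart a →
      algebraMap ℝ A (k * δ) ≤ imPart a ∧ 0 ≤ imPart a ∧ IsUnit (imPart a) := by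
    intro a ha
    have h1 : algebraMap ℝ A (k * δ) ≤ k • m := by
      calc algebraMap ℝ A (k * δ) = k • algebraMap ℝ A δ := by
            rw [Algebra.algebraMap_eq_smul_one, Algebra.algebraMap_eq_smul_one, smul_smul]
        _ ≤ k • m := smul_le_smul_of_nonneg_left hδ hk.le
    have h2 := h1.trans ha
    have h0 : (0 : A) ≤ algebraMap ℝ A (k * δ) := by
      rw [Algebra.algebraMap_eq_smul_one]
      exact smul_nonneg (by positivity) (by simpa using star_mul_self_nonneg (1 : A))
    refine ⟨h2, h0.trans h2, ?_⟩
    exact CStarAlgebra.isUnit_of_le _ h2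
      ⟨h0, (isUnit_iff_ne_zero.mpr (by positivity)).map (algebraMap ℝ A)⟩
  set S' : Set A := {a | k • m ≤ imPart a} ∩
      (fun a : A => star (a - c) * Ring.inverse (imPart a) * (a - c)) ⁻¹'
        {x : A | x ≤ r ^ 2 • m} with hS'
  have hset : ncUpperBall c r = S' := by
    ext a
    simp only [ncUpperBall, hS', Set.mem_setOf_eq, Set.mem_inter_iff, Set.mem_preimage]
    constructor
    · rintro ⟨⟨hp, hpu⟩, hnorm⟩
      have hquad := (normCond_iff hm hmu hp hpu hr.le).mp hnorm
      refine ⟨?_, hquad⟩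
      have himd : (2 * Complex.I) • (imPart a - m) = (a - c) - star (a - c) := by
        rw [hmdef, ← imPart_sub, two_I_smul_imPart]
      have hlow := lowerBound hp hpu himd hr hquad
      calc k • m ≤ k • ((r ^ 2 + 2) • imPart a) := smul_le_smul_of_nonneg_left hlow hk.le
        _ = imPart a := by
            rw [smul_smul, hkdef, inv_mul_cancel₀ (by positivity), one_smul]
    · rintro ⟨h1, h2⟩
      obtain ⟨-, hp, hpu⟩ := hunit a h1
      exact ⟨⟨hp, hpu⟩, (normCond_iff hm hmu hp hpu hr.le).mpr h2⟩
  rw [hset, hS']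
  have hF : IsClosed {a : A | k • m ≤ imPart a} := by
    have h1 : IsClosed {x : A | k • m ≤ x} := isClosed_le continuous_const continuous_id
    exact h1.preimage continuous_imPart
  have hg : ContinuousOn (fun a : A => star (a - c) * Ring.inverse (imPart a) * (a - c))
      {a : A | k • m ≤ imPart a} := by
    intro a ha
    apply ContinuousAt.continuousWithinAt
    obtain ⟨-, -, hu⟩ := hunit a ha
    have h1 : ContinuousAt (fun x : A => Ring.inverse (imPart x)) a := by
      have := NormedRing.inverse_continuousAt hu.unit
      rw [IsUnit.unit_spec] at this
      exact this.comp continuous_imPart.continuousAt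
    exact (((continuous_star.comp (continuous_id.sub continuous_const)).continuousAt.mul
      h1).mul (continuous_id.sub continuous_const).continuousAt)
  exact hg.preimage_isClosed_of_isClosed hF (isClosed_le continuous_id continuous_const)
end

section
/- Let f : ℂ⁺ → ℂ⁺ be analytic, α ∈ ℝ, c = liminf_{z→α} Im f(z)/Im z < ∞, and f(α) the associated boundary value. Then for every M ≥ 0 and every z in the Stolz region D_M = {z ∈ ℂ⁺ : |Re z − α| ≤ M Im z}, one has Im f(z)/Im z ≤ c(M² + 1). -/
open Filter Topology


open Complex Metric

lemma key_id (a b : ℂ) :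
    ‖a - (starRingEnd ℂ) b‖ ^ 2 = ‖a - b‖ ^ 2 + 4 * a.im * b.im := by
  rw [Complex.sq_norm, Complex.sq_norm, Complex.normSq_apply, Complex.normSq_apply]
  simp only [Complex.sub_re, Complex.sub_im, Complex.conj_re, Complex.conj_im]
  ring

/-- `|a - b| < |a - conj b|` when both have positive imaginary part. -/
lemma abs_sub_lt (a b : ℂ) (ha : 0 < a.im) (hb : 0 < b.im) :
    ‖a - b‖ < ‖a - (starRingEnd ℂ) b‖ := by
  have h := key_id a b
  nlinarith [norm_nonneg (a - b), norm_nonneg (a - (starRingEnd ℂ) b)]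

lemma ne_conj (a b : ℂ) (ha : 0 < a.im) (hb : 0 < b.im) : a - (starRingEnd ℂ) b ≠ 0 := by
  intro h
  have : a.im - ((starRingEnd ℂ) b).im = 0 := by rw [← Complex.sub_im, h]; simp
  rw [Complex.conj_im] at this
  linarith

/-- Schwarz–Pick for the upper half-plane. -/
lemma schwarz_pick (f : ℂ → ℂ) (hf : DifferentiableOn ℂ f {z : ℂ | 0 < z.im})
    (hmap : ∀ z : ℂ, 0 < z.im → 0 < (f z).im) (z w : ℂ) (hz : 0 < z.im) (hw : 0 < w.im) :
    ‖f z - f w‖ * ‖z - (starRingEnd ℂ) w‖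
      ≤ ‖z - w‖ * ‖f z - (starRingEnd ℂ) (f w)‖ := by
  set wb := (starRingEnd ℂ) w with hwb
  set fw := f w with hfw
  set fwb := (starRingEnd ℂ) fw with hfwb
  -- Cayley transforms
  set φ : ℂ → ℂ := fun ζ => (w - ζ * wb) / (1 - ζ) with hφ
  set ψ : ℂ → ℂ := fun u => (u - fw) / (u - fwb) with hψ
  have hden : ∀ ζ : ℂ, ζ ∈ ball (0:ℂ) 1 → (1 : ℂ) - ζ ≠ 0 := by
    intro ζ hζ h
    have : ζ = 1 := by linear_combination -h
    rw [this] at hζ; simp at hζ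
  -- φ maps the disk into the half plane
  have hφmem : ∀ ζ : ℂ, ζ ∈ ball (0:ℂ) 1 → 0 < (φ ζ).im := by
    intro ζ hζ
    have h1 : (1:ℂ) - ζ ≠ 0 := hden ζ hζ
    have h2 : Complex.normSq (1 - ζ) > 0 := Complex.normSq_pos.2 h1
    have h3 : Complex.normSq ζ < 1 := by
      have h := mem_ball_zero_iff.1 hζ
      nlinarith [Complex.sq_norm ζ, norm_nonneg ζ]
    have h4 : (φ ζ).im = w.im * (1 - Complex.normSq ζ) / Complex.normSq (1 - ζ) := by
      rw [hφ]
      simp only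
      rw [Complex.div_im]
      rw [Complex.normSq_apply, Complex.normSq_apply]
      simp only [Complex.sub_re, Complex.sub_im, Complex.mul_re, Complex.mul_im, hwb,
        Complex.conj_re, Complex.conj_im, Complex.one_re, Complex.one_im]
      field_simp
      ring
    rw [h4]
    exact div_pos (mul_pos hw (by linarith)) h2
  -- ψ maps the half plane into the disk
  have hψmem : ∀ u : ℂ, 0 < u.im → ψ u ∈ ball (0:ℂ) 1 := by
    intro u hu
    rw [mem_ball_zero_iff, hψ]
    simp only
    rw [norm_div, div_lt_one]
    · exact abs_sub_lt u fw hu (hmap w hw)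
    · have := ne_conj u fw hu (hmap w hw)
      rw [hfwb]
      exact norm_pos_iff.mpr this
  set g : ℂ → ℂ := fun ζ => ψ (f (φ ζ)) with hg
  have hgd : DifferentiableOn ℂ g (ball (0:ℂ) 1) := by
    intro ζ hζ
    have h1 : (1:ℂ) - ζ ≠ 0 := hden ζ hζ
    have hφd : DifferentiableAt ℂ φ ζ := by
      apply DifferentiableAt.div
      · fun_prop
      · fun_prop
      · exact h1
    have hfd : DifferentiableAt ℂ f (φ ζ) := by
      have : {z : ℂ | 0 < z.im}.EqOn f f := fun _ _ => rfl
      have hopen : IsOpen {z : ℂ | 0 < z.im} := by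
        exact isOpen_lt continuous_const Complex.continuous_im
      exact (hf.differentiableAt (hopen.mem_nhds (hφmem ζ hζ))).congr_of_eventuallyEq
        (Filter.EventuallyEq.refl _ _)
    have hψd : DifferentiableAt ℂ ψ (f (φ ζ)) := by
      apply DifferentiableAt.div
      · fun_prop
      · fun_prop
      · exact ne_conj (f (φ ζ)) fw (hmap _ (hφmem ζ hζ)) (hmap w hw)
    exact ((hψd.comp ζ (hfd.comp ζ hφd))).differentiableWithinAt
  have hgmaps : Set.MapsTo g (ball (0:ℂ) 1) (ball (0:ℂ) 1) := by
    intro ζ hζ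
    exact hψmem _ (hmap _ (hφmem ζ hζ))
  have hg0 : g 0 = 0 := by
    have : φ 0 = w := by rw [hφ]; simp
    rw [hg]; simp only [this, hψ]
    simp [hfw]
  -- the point ζ0
  set ζ0 : ℂ := (z - w) / (z - wb) with hζ0
  have hzwb : z - wb ≠ 0 := ne_conj z w hz hw
  have hζ0lt : ‖ζ0‖ < 1 := by
    rw [hζ0, norm_div, div_lt_one (norm_pos_iff.mpr hzwb)]
    exact abs_sub_lt z w hz hw
  have hφζ0 : φ ζ0 = z := by
    rw [hφ]
    simp only [hζ0]
    have h1 : (1:ℂ) - (z - w) / (z - wb) ≠ 0 := by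
      apply hden
      rw [mem_ball_zero_iff]
      exact hζ0lt
    have hwwb : w - wb ≠ 0 := by
      intro h
      have : (w - wb).im = 0 := by rw [h]; simp
      rw [Complex.sub_im, hwb, Complex.conj_im] at this
      linarith
    field_simp
    rw [div_eq_iff (by rw [show z - wb - (z - w) = w - wb by ring]; exact hwwb)]
    ring
  have := Complex.norm_le_norm_of_mapsTo_ball_self hgd (hgmaps.mono_right ball_subset_closedBall) hg0 hζ0lt
  rw [hg] at this
  simp only [hφζ0] at this
  rw [hψ] at this
  simp only at this
  rw [norm_div, hζ0, norm_div] at this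
  rw [div_le_div_iff₀ (norm_pos_iff.mpr (ne_conj (f z) fw (hmap z hz) (hmap w hw)))
    (norm_pos_iff.mpr hzwb)] at this
  linarith [this]

/-- Julia-type inequality. -/
lemma julia_ineq (f : ℂ → ℂ) (hf : DifferentiableOn ℂ f {z : ℂ | 0 < z.im})
    (hmap : ∀ z : ℂ, 0 < z.im → 0 < (f z).im) (z w : ℂ) (hz : 0 < z.im) (hw : 0 < w.im) :
    ‖f z - (starRingEnd ℂ) (f w)‖ ^ 2 * (z.im * w.im)
      ≤ ‖z - (starRingEnd ℂ) w‖ ^ 2 * ((f z).im * (f w).im) := by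
  have sp := schwarz_pick f hf hmap z w hz hw
  have h1 := key_id (f z) (f w)
  have h2 := key_id z w
  have hsq : (‖f z - f w‖ * ‖z - (starRingEnd ℂ) w‖) ^ 2
      ≤ (‖z - w‖ * ‖f z - (starRingEnd ℂ) (f w)‖) ^ 2 := by
    apply pow_le_pow_left₀ (by positivity) sp
  nlinarith [hsq]


set_option maxHeartbeats 1000000 in
/-- Let `f : ℂ⁺ → ℂ⁺` be analytic, `α ∈ ℝ`, and `c = liminf_{z→α} Im f(z)/Im z < ∞`.
Then for every `M ≥ 0` and every `z` in the Stolz region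
`D_M = {z ∈ ℂ⁺ : |Re z − α| ≤ M Im z}`, one has `Im f(z)/Im z ≤ c (M² + 1)`. -/
theorem stmt_14 (f : ℂ → ℂ)
    (hf : DifferentiableOn ℂ f {z : ℂ | 0 < z.im})
    (hmap : ∀ z : ℂ, 0 < z.im → 0 < (f z).im)
    (α : ℝ) (c : ℝ)
    (hc : Filter.liminf (fun z : ℂ => (((f z).im / z.im : ℝ) : EReal))
        (𝓝[{z : ℂ | 0 < z.im}] (α : ℂ)) = (c : EReal)) :
    ∀ M : ℝ, 0 ≤ M → ∀ z : ℂ, 0 < z.im → |z.re - α| ≤ M * z.im →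
      (f z).im / z.im ≤ c * (M ^ 2 + 1) := by
  set S : Set ℂ := {z : ℂ | 0 < z.im} with hS
  set L : Filter ℂ := 𝓝[S] (α : ℂ) with hL
  -- the filter is nontrivial
  have hαcl : (α : ℂ) ∈ closure S := by
    have hseq : Filter.Tendsto (fun n : ℕ => (α : ℂ) + ((1 / (n + 1) : ℝ) : ℂ) * Complex.I)
        Filter.atTop (𝓝 (α : ℂ)) := by
      have h0 : Filter.Tendsto (fun n : ℕ => (1 / (n + 1) : ℝ)) Filter.atTop (𝓝 0) :=
        tendsto_one_div_add_atTop_nhds_zero_nat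
      have h1 : Filter.Tendsto (fun n : ℕ => ((1 / (n + 1) : ℝ) : ℂ)) Filter.atTop (𝓝 0) := by
        have := (Complex.continuous_ofReal.tendsto 0).comp h0
        simpa [Function.comp_def] using this
      have h2 := h1.mul_const Complex.I
      rw [zero_mul] at h2
      simpa using (tendsto_const_nhds (x := (α : ℂ))).add h2
    apply mem_closure_of_tendsto hseq
    apply Filter.Eventually.of_forall
    intro n
    simp only [hS, Set.mem_setOf_eq, Complex.add_im, Complex.ofReal_im,
      Complex.mul_im, Complex.I_im, Complex.I_re, Complex.ofReal_re, Complex.ofReal_im]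
    positivity
  have hne : L.NeBot := mem_closure_iff_nhdsWithin_neBot.1 hαcl
  have hcb : Filter.IsCoboundedUnder (· ≥ ·) L
      (fun w : ℂ => (((f w).im / w.im : ℝ) : EReal)) :=
    Filter.isCoboundedUnder_ge_of_le L (x := ⊤) (fun w => le_top)
  -- c is nonnegative
  have hc0 : 0 ≤ c := by
    have h1 : (0 : EReal) ≤ Filter.liminf (fun z : ℂ => (((f z).im / z.im : ℝ) : EReal)) L := by
      apply Filter.le_liminf_of_le hcb
      apply Filter.Eventually.mono (eventually_mem_nhdsWithin)
      intro w hw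
      have hw' : 0 < w.im := hw
      have : (0:ℝ) ≤ (f w).im / w.im := le_of_lt (div_pos (hmap w hw') hw')
      exact_mod_cast this
    rw [hc] at h1
    exact_mod_cast h1
  intro M hM z hz hzM
  -- reduce to `Im f z * Im z ≤ c * |z - α|²`
  have key : (f z).im * z.im ≤ c * ‖z - (α : ℂ)‖ ^ 2 := by
    set D : ℝ := ‖z - (α : ℂ)‖ ^ 2 with hD
    have hεbound : ∀ ε : ℝ, 0 < ε → (f z).im * z.im ≤ (c + ε) * (D + ε) := by
      intro ε hε
      -- frequently small quotient
      have hfreq : ∃ᶠ w in L, (f w).im / w.im < c + ε := by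
        have hlt : Filter.liminf (fun w : ℂ => (((f w).im / w.im : ℝ) : EReal)) L
            < ((c + ε : ℝ) : EReal) := by
          rw [hc]
          exact_mod_cast (by linarith : c < c + ε)
        have := Filter.frequently_lt_of_liminf_lt hcb hlt
        apply this.mono
        intro w hw
        exact_mod_cast hw
      -- eventually conj w is close to α
      have hev : ∀ᶠ w in L, ‖z - (starRingEnd ℂ) w‖ ^ 2 < D + ε := by
        have hcont : Filter.Tendsto (fun w : ℂ => ‖z - (starRingEnd ℂ) w‖ ^ 2)
            L (𝓝 D) := by
          have hcts : Continuous (fun w : ℂ => ‖z - (starRingEnd ℂ) w‖ ^ 2) :=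
            (continuous_norm.comp (continuous_const.sub Complex.continuous_conj)).pow 2
          have : Filter.Tendsto (fun w : ℂ => ‖z - (starRingEnd ℂ) w‖ ^ 2)
              (𝓝 (α : ℂ)) (𝓝 (‖z - (starRingEnd ℂ) (α : ℂ)‖ ^ 2)) :=
            hcts.tendsto _
          rw [Complex.conj_ofReal] at this
          exact this.mono_left nhdsWithin_le_nhds
        exact hcont.eventually_lt_const (by linarith)
      obtain ⟨w, hw1, hw2, hw3⟩ :=
        (hfreq.and_eventually (hev.and eventually_mem_nhdsWithin)).exists
      have hwim : 0 < w.im := hw3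
      have hfwim : 0 < (f w).im := hmap w hwim
      have hfzim : 0 < (f z).im := hmap z hz
      have hq : (f w).im < (c + ε) * w.im := by
        rw [div_lt_iff₀ hwim] at hw1
        linarith
      have hj := julia_ineq f hf hmap z w hz hwim
      have hlow : (f z).im ^ 2 ≤ ‖f z - (starRingEnd ℂ) (f w)‖ ^ 2 := by
        have h1 : (f z).im ≤ (f z - (starRingEnd ℂ) (f w)).im := by
          rw [Complex.sub_im, Complex.conj_im]
          linarith
        have h2 : |(f z - (starRingEnd ℂ) (f w)).im| ≤ ‖f z - (starRingEnd ℂ) (f w)‖ :=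
          Complex.abs_im_le_norm _
        have h3 : (f z).im ^ 2 ≤ ((f z - (starRingEnd ℂ) (f w)).im) ^ 2 := by nlinarith
        have h4 : ((f z - (starRingEnd ℂ) (f w)).im) ^ 2
            ≤ ‖f z - (starRingEnd ℂ) (f w)‖ ^ 2 := by
          rw [← _root_.sq_abs ((f z - (starRingEnd ℂ) (f w)).im)]
          exact pow_le_pow_left₀ (abs_nonneg _) h2 2
        linarith
      -- combine
      have hchain : (f z).im ^ 2 * (z.im * w.im) ≤ ((D + ε) * ((c + ε) * w.im)) * (f z).im := by
        calc (f z).im ^ 2 * (z.im * w.im)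
            ≤ ‖f z - (starRingEnd ℂ) (f w)‖ ^ 2 * (z.im * w.im) := by
              apply mul_le_mul_of_nonneg_right hlow (by positivity)
          _ ≤ ‖z - (starRingEnd ℂ) w‖ ^ 2 * ((f z).im * (f w).im) := hj
          _ ≤ ((D + ε) * ((c + ε) * w.im)) * (f z).im := by
              have hb1 : ‖z - (starRingEnd ℂ) w‖ ^ 2 * (f w).im
                  ≤ (D + ε) * ((c + ε) * w.im) := by
                apply mul_le_mul (le_of_lt hw2) (le_of_lt hq) (le_of_lt hfwim) (by positivity)
              nlinarith [hfzim]
      rw [← mul_le_mul_iff_of_pos_right (mul_pos hfzim hwim)]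
      nlinarith [hchain]
    -- let ε → 0
    have htend : Filter.Tendsto (fun ε : ℝ => (c + ε) * (D + ε)) (𝓝[>] 0) (𝓝 (c * D)) := by
      have : Filter.Tendsto (fun ε : ℝ => (c + ε) * (D + ε)) (𝓝 0) (𝓝 ((c + 0) * (D + 0))) := by
        apply Filter.Tendsto.mul <;> exact (tendsto_const_nhds.add tendsto_id)
      simp only [add_zero] at this
      exact this.mono_left nhdsWithin_le_nhds
    apply ge_of_tendsto htend
    apply Filter.eventually_of_mem self_mem_nhdsWithin
    intro ε hε
    exact hεbound ε hε
  -- conclude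
  have hD2 : ‖z - (α : ℂ)‖ ^ 2 ≤ (M ^ 2 + 1) * z.im ^ 2 := by
    rw [Complex.sq_norm, Complex.normSq_apply]
    simp only [Complex.sub_re, Complex.sub_im, Complex.ofReal_re, Complex.ofReal_im, sub_zero]
    have h1 : |z.re - α| ^ 2 ≤ (M * z.im) ^ 2 := by
      apply pow_le_pow_left₀ (abs_nonneg _) hzM
    rw [_root_.sq_abs] at h1
    nlinarith
  rw [div_le_iff₀ hz]
  have : c * ‖z - (α : ℂ)‖ ^ 2 ≤ c * ((M ^ 2 + 1) * z.im ^ 2) :=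
    mul_le_mul_of_nonneg_left hD2 hc0
  nlinarith [key]
end
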